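/- arXiv:1604.05608 — 5 statements merged into one kernel-verified Lean document; each statement's English description precedes it below -/
import Mathlib

section
/- For all nonnegative integers n and k, the coefficient y_3(n,k;λ;a,b) defined by (e^{bkt}/k!)(λe^{(a-b)t}+1)^k = Σ_{n≥0} y_3(n,k;λ;a,b) t^n/n! satisfies y_3(n,k;λ;a,b) = (1/k!) Σ_{j=0}^{k} C(k,j) λ^j (bk + j(a-b))^n. -/
/-!
Expanding `(λ e^{(a-b)t} + 1)^k` by the binomial theorem turns the generating function into the
finite combination `∑ⱼ C(k,j) λʲ e^{(bk + j(a-b))t} / k!` of exponentials, whose exponential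
generating coefficients are read off termwise; they are the `y₃(n,k)` because the coefficients of
a power series converging everywhere are unique.
-/

open Finset FormalMultilinearSeries
open scoped Nat

theorem eq_zero_of_forall_hasSum_mul_pow {𝕜 : Type*} [NontriviallyNormedField 𝕜] {c : ℕ → 𝕜}
    (h : ∀ t : 𝕜, HasSum (fun n => c n * t ^ n) 0) : c = 0 := by
  have hradius : 1 ≤ (ofScalars 𝕜 c).radius := by
    simpa using (ofScalars 𝕜 c).le_radius_of_tendsto (r := 1) (l := 0)
      (by simpa using (h 1).summable.tendsto_atTop_zero.norm)
  have hp : HasFPowerSeriesAt 0 (ofScalars 𝕜 c) 0 :=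
    ⟨1, hradius, one_pos, fun {t} _ => by simpa [ofScalars_apply_eq, mul_comm] using h t⟩
  exact (ofScalars_series_eq_zero 𝕜).1 hp.eq_zero

theorem eq_of_forall_hasSum_egf {𝕜 : Type*} [NontriviallyNormedField 𝕜] [CharZero 𝕜]
    {c d : ℕ → 𝕜} {f : 𝕜 → 𝕜} (hc : ∀ t, HasSum (fun n => c n * t ^ n / n !) (f t))
    (hd : ∀ t, HasSum (fun n => d n * t ^ n / n !) (f t)) : c = d := by
  have h := eq_zero_of_forall_hasSum_mul_pow (c := fun n => (c n - d n) / n !) fun t => by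
    simpa [sub_div, sub_mul, div_mul_eq_mul_div] using (hc t).sub (hd t)
  funext n
  simpa [sub_eq_zero, Nat.factorial_ne_zero] using congrFun h n

theorem hasSum_egf_sum_exp {ι : Type*} (s : Finset ι) (w μ : ι → ℂ) (t : ℂ) :
    HasSum (fun n => (∑ j ∈ s, w j * μ j ^ n) * t ^ n / n !)
      (∑ j ∈ s, w j * Complex.exp (μ j * t)) := by
  refine (hasSum_sum (f := fun j n => w j * μ j ^ n * t ^ n / n !) fun j _ => ?_).congr_fun
    fun n => by simp only [sum_mul, sum_div]
  rw [Complex.exp_eq_exp_ℂ]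
  refine ((NormedSpace.expSeries_div_hasSum_exp (μ j * t)).mul_left (w j)).congr_fun fun n => ?_
  rw [mul_pow]
  ring

theorem exp_mul_mul_add_one_pow (lam a b t : ℂ) (k : ℕ) :
    Complex.exp (b * k * t) * (lam * Complex.exp ((a - b) * t) + 1) ^ k =
      ∑ j ∈ range (k + 1), k.choose j * lam ^ j * Complex.exp ((b * k + j * (a - b)) * t) := by
  rw [add_pow, mul_sum]
  refine sum_congr rfl fun j _ => ?_
  rw [mul_pow, ← Complex.exp_nat_mul, one_pow, add_mul, Complex.exp_add, mul_assoc (j : ℂ)]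
  ring

theorem stmt2 (lam a b : ℂ) (y : ℕ → ℕ → ℂ)
    (hy : ∀ k : ℕ, ∀ t : ℂ, HasSum (fun n => y n k * t ^ n / n.factorial)
      (Complex.exp (b * k * t) / k.factorial *
        (lam * Complex.exp ((a - b) * t) + 1) ^ k)) :
    ∀ n k : ℕ, y n k =
      (k.factorial : ℂ)⁻¹ * ∑ j ∈ Finset.range (k + 1),
        (k.choose j : ℂ) * lam ^ j * (b * k + j * (a - b)) ^ n := by
  intro n k
  have hz : ∀ t : ℂ, HasSum (fun n => ((k ! : ℂ)⁻¹ * ∑ j ∈ range (k + 1),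
        (k.choose j : ℂ) * lam ^ j * (b * k + j * (a - b)) ^ n) * t ^ n / n !)
      (Complex.exp (b * k * t) / k ! * (lam * Complex.exp ((a - b) * t) + 1) ^ k) := by
    intro t
    have h := hasSum_egf_sum_exp (range (k + 1)) (fun j => (k ! : ℂ)⁻¹ * (k.choose j * lam ^ j))
      (fun j => b * k + j * (a - b)) t
    rw [div_eq_inv_mul, mul_assoc, exp_mul_mul_add_one_pow]
    simpa only [mul_assoc, ← mul_sum] using h
  exact congrFun (eq_of_forall_hasSum_egf (hy k) hz) n
end

section
/- For all nonnegative integers n, k: y_3(n,k;λ;a,b) = Σ_{j=0}^{k} Σ_{m=0}^{n} C(n,m) a^m b^{n-m} y_1(m,j;λ) S(n-m, k-j), where S denotes the Stirling numbers of the second kind. -/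
open Finset

noncomputable def y1 (n k : ℕ) (lam : ℂ) : ℂ :=
  (k.factorial : ℂ)⁻¹ * ∑ j ∈ Finset.range (k + 1),
    (k.choose j : ℂ) * (j : ℂ) ^ n * lam ^ j

noncomputable def y3 (n k : ℕ) (lam a b : ℂ) : ℂ :=
  (k.factorial : ℂ)⁻¹ * ∑ j ∈ Finset.range (k + 1),
    (k.choose j : ℂ) * lam ^ j * (b * k + j * (a - b)) ^ n

noncomputable def stirling2 (n k : ℕ) : ℂ :=
  (k.factorial : ℂ)⁻¹ * ∑ j ∈ Finset.range (k + 1),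
    (-1 : ℂ) ^ j * (k.choose j : ℂ) * ((k - j : ℕ) : ℂ) ^ n

-- choose product identity
lemma cmc (x q r : ℕ) (hrq : r ≤ q) :
    x.choose q * q.choose r = x.choose r * (x - r).choose (q - r) := by
  rcases le_or_gt q x with hqx | hqx
  · have hrx : r ≤ x := hrq.trans hqx
    apply Nat.eq_of_mul_eq_mul_right (Nat.mul_pos (Nat.mul_pos r.factorial_pos (q-r).factorial_pos) (x-q).factorial_pos)
    have e1 : q.choose r * r.factorial * (q - r).factorial = q.factorial :=
      Nat.choose_mul_factorial_mul_factorial hrq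
    have e2 : x.choose q * q.factorial * (x - q).factorial = x.factorial :=
      Nat.choose_mul_factorial_mul_factorial hqx
    have e3 : x.choose r * r.factorial * (x - r).factorial = x.factorial :=
      Nat.choose_mul_factorial_mul_factorial hrx
    have h4 : q - r ≤ x - r := by omega
    have e4 : (x - r).choose (q - r) * (q - r).factorial * (x - r - (q - r)).factorial = (x - r).factorial :=
      Nat.choose_mul_factorial_mul_factorial h4
    have h5 : x - r - (q - r) = x - q := by omega
    rw [h5] at e4
    calc x.choose q * q.choose r * (r.factorial * (q-r).factorial * (x-q).factorial)
        = x.choose q * (q.choose r * r.factorial * (q-r).factorial) * (x-q).factorial := by ring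
      _ = x.choose q * q.factorial * (x-q).factorial := by rw [e1]
      _ = x.factorial := e2
      _ = x.choose r * r.factorial * (x - r).factorial := e3.symm
      _ = x.choose r * r.factorial * ((x-r).choose (q-r) * (q-r).factorial * (x-q).factorial) := by rw [e4]
      _ = x.choose r * (x-r).choose (q-r) * (r.factorial * (q-r).factorial * (x-q).factorial) := by ring
  · rw [Nat.choose_eq_zero_of_lt hqx, Nat.zero_mul]
    rcases le_or_gt r x with hrx | hrx
    · rw [Nat.choose_eq_zero_of_lt (by omega : x - r < q - r), Nat.mul_zero]
    · rw [Nat.choose_eq_zero_of_lt hrx, Nat.zero_mul]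

lemma natid (k i j : ℕ) (hi : i ≤ k) (hj : j ≤ k) :
    k.choose i * (k - i).choose (k - j) * ((k - j).factorial * j.factorial)
      = j.choose i * k.factorial := by
  rcases le_or_gt i j with hij | hij
  · apply Nat.eq_of_mul_eq_mul_right (Nat.mul_pos i.factorial_pos (j-i).factorial_pos)
    have e1 : j.choose i * i.factorial * (j - i).factorial = j.factorial :=
      Nat.choose_mul_factorial_mul_factorial hij
    have e2 : k.choose i * i.factorial * (k - i).factorial = k.factorial :=
      Nat.choose_mul_factorial_mul_factorial hi
    have h3 : k - j ≤ k - i := by omega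
    have e3 : (k - i).choose (k - j) * (k - j).factorial * (k - i - (k - j)).factorial = (k - i).factorial :=
      Nat.choose_mul_factorial_mul_factorial h3
    have h4 : k - i - (k - j) = j - i := by omega
    rw [h4] at e3
    calc k.choose i * (k-i).choose (k-j) * ((k-j).factorial * j.factorial) * (i.factorial * (j-i).factorial)
        = k.choose i * ((k-i).choose (k-j) * (k-j).factorial * (j-i).factorial) * i.factorial * j.factorial := by ring
      _ = k.choose i * (k-i).factorial * i.factorial * j.factorial := by rw [e3]
      _ = (k.choose i * i.factorial * (k-i).factorial) * j.factorial := by ring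
      _ = k.factorial * j.factorial := by rw [e2]
      _ = (j.choose i * i.factorial * (j-i).factorial) * k.factorial := by rw [e1]; ring
      _ = j.choose i * k.factorial * (i.factorial * (j-i).factorial) := by ring
  · rw [Nat.choose_eq_zero_of_lt hij, Nat.zero_mul,
      Nat.choose_eq_zero_of_lt (by omega : k - i < k - j)]
    ring

lemma altsum (N M : ℕ) (h : N ≤ M) :
    ∑ s ∈ range (M + 1), (-1 : ℂ) ^ s * (N.choose s : ℂ) = if N = 0 then 1 else 0 := by
  have hsub : range (N + 1) ⊆ range (M + 1) := range_subset_range.2 (by omega)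
  rw [← Finset.sum_subset hsub (fun s _ hs => by
    rw [Nat.choose_eq_zero_of_lt (by simpa using hs)]; simp)]
  have := Int.alternating_sum_range_choose (n := N)
  have h2 : ((∑ i ∈ range (N + 1), (-1 : ℤ) ^ i * N.choose i : ℤ) : ℂ)
      = ((if N = 0 then 1 else 0 : ℤ) : ℂ) := by rw [this]
  push_cast at h2
  rw [h2]

lemma stirl (p q k : ℕ) (hq : q ≤ k) :
    stirling2 p q * (q.factorial : ℂ) =
      ∑ r ∈ range (k + 1), (-1 : ℂ) ^ (q - r) * (q.choose r : ℂ) * (r : ℂ) ^ p := by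
  have hfac : (q.factorial : ℂ) ≠ 0 := Nat.cast_ne_zero.2 q.factorial_ne_zero
  rw [stirling2, mul_comm ((q.factorial : ℂ)⁻¹), mul_assoc, inv_mul_cancel₀ hfac, mul_one]
  have hsub : range (q + 1) ⊆ range (k + 1) := range_subset_range.2 (by omega)
  rw [← Finset.sum_subset hsub (fun r _ hr => by
    have : q < r := by simpa using hr
    rw [Nat.choose_eq_zero_of_lt this]; simp)]
  rw [← Finset.sum_range_reflect
    (fun l => (-1 : ℂ) ^ l * (q.choose l : ℂ) * ((q - l : ℕ) : ℂ) ^ p) (q + 1)]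
  apply Finset.sum_congr rfl
  intro r hrm
  have hrq : r ≤ q := by simpa [Nat.lt_succ_iff] using hrm
  have h1 : q + 1 - 1 - r = q - r := by omega
  have h2 : q - (q - r) = r := by omega
  simp only [h1, h2, Nat.choose_symm hrq]

lemma innerSumChoose (k x r : ℕ) (hx : x ≤ k) (hr : r ≤ k) :
    ∑ q ∈ range (k + 1), (x.choose q : ℂ) * ((-1 : ℂ) ^ (q - r) * (q.choose r : ℂ))
      = if r = x then 1 else 0 := by
  have hsub : Ico r (k + 1) ⊆ range (k + 1) := by
    rw [range_eq_Ico]; exact Ico_subset_Ico (Nat.zero_le r) le_rfl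
  rw [← Finset.sum_subset hsub (fun q hq1 hq2 => by
    have : q < r := by simp at hq1 hq2 ⊢; omega
    rw [Nat.choose_eq_zero_of_lt this]; simp)]
  rw [Finset.sum_Ico_eq_sum_range]
  have hstep : ∀ t, (x.choose (r + t) : ℂ) * ((-1 : ℂ) ^ (r + t - r) * ((r + t).choose r : ℂ))
      = (x.choose r : ℂ) * ((-1 : ℂ) ^ t * ((x - r).choose t : ℂ)) := by
    intro t
    have h1 : r + t - r = t := by omega
    have h2 := cmc x (r + t) r (Nat.le_add_right r t)
    rw [h1] at h2 ⊢
    have h2' : ((x.choose (r+t) : ℕ) : ℂ) * ((r+t).choose r : ℂ) = (x.choose r : ℂ) * ((x-r).choose t : ℂ) := by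
      exact_mod_cast congrArg (Nat.cast : ℕ → ℂ) h2
    calc (x.choose (r+t) : ℂ) * ((-1:ℂ)^t * ((r+t).choose r : ℂ))
        = (-1:ℂ)^t * ((x.choose (r+t) : ℂ) * ((r+t).choose r : ℂ)) := by ring
      _ = (-1:ℂ)^t * ((x.choose r : ℂ) * ((x-r).choose t : ℂ)) := by rw [h2']
      _ = (x.choose r : ℂ) * ((-1:ℂ)^t * ((x-r).choose t : ℂ)) := by ring
  simp only [hstep]
  rw [← Finset.mul_sum]
  rcases le_or_gt r x with hrx | hrx
  · have hM : k + 1 - r = (k - r) + 1 := by omega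
    rw [hM, altsum (x - r) (k - r) (by omega)]
    rcases eq_or_ne r x with h | h
    · subst h; simp
    · rw [if_neg (by omega), if_neg h, mul_zero]
  · rw [Nat.choose_eq_zero_of_lt hrx, if_neg (by omega)]
    simp

lemma key (p k x : ℕ) (hx : x ≤ k) :
    ((x : ℂ)) ^ p = ∑ q ∈ range (k + 1), stirling2 p q * (q.factorial : ℂ) * (x.choose q : ℂ) := by
  have h1 : ∀ q ∈ range (k + 1),
      stirling2 p q * (q.factorial : ℂ) * (x.choose q : ℂ)
        = ∑ r ∈ range (k + 1), (-1 : ℂ) ^ (q - r) * (q.choose r : ℂ) * (r : ℂ) ^ p * (x.choose q : ℂ) := by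
    intro q hq
    rw [stirl p q k (by simpa [Nat.lt_succ_iff] using hq), Finset.sum_mul]
  rw [Finset.sum_congr rfl h1, Finset.sum_comm]
  have h2 : ∀ r ∈ range (k + 1),
      (∑ q ∈ range (k + 1), (-1 : ℂ) ^ (q - r) * (q.choose r : ℂ) * (r : ℂ) ^ p * (x.choose q : ℂ))
        = (if r = x then (r : ℂ) ^ p else 0) := by
    intro r hrm
    have hr : r ≤ k := by simpa [Nat.lt_succ_iff] using hrm
    have := innerSumChoose k x r hx hr
    calc (∑ q ∈ range (k + 1), (-1 : ℂ) ^ (q - r) * (q.choose r : ℂ) * (r : ℂ) ^ p * (x.choose q : ℂ))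
        = (r : ℂ) ^ p * ∑ q ∈ range (k + 1), (x.choose q : ℂ) * ((-1 : ℂ) ^ (q - r) * (q.choose r : ℂ)) := by
          rw [Finset.mul_sum]; exact Finset.sum_congr rfl fun q _ => by ring
      _ = (r : ℂ) ^ p * (if r = x then 1 else 0) := by rw [this]
      _ = (if r = x then (r : ℂ) ^ p else 0) := by split <;> simp
  rw [Finset.sum_congr rfl h2, Finset.sum_ite_eq' (range (k + 1)) x (fun r => (r : ℂ) ^ p),
    if_pos (mem_range.2 (by omega))]

lemma mid (m p k : ℕ) (lam : ℂ) :
    (k.factorial : ℂ)⁻¹ * ∑ i ∈ range (k + 1),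
        (k.choose i : ℂ) * lam ^ i * ((i : ℂ) ^ m * ((k - i : ℕ) : ℂ) ^ p)
      = ∑ j ∈ range (k + 1), y1 m j lam * stirling2 p (k - j) := by
  have hk : (k.factorial : ℂ) ≠ 0 := Nat.cast_ne_zero.2 k.factorial_ne_zero
  have h1 : ∀ i ∈ range (k + 1),
      (k.choose i : ℂ) * lam ^ i * ((i : ℂ) ^ m * ((k - i : ℕ) : ℂ) ^ p)
        = ∑ q ∈ range (k + 1), (k.choose i : ℂ) * lam ^ i * (i : ℂ) ^ m *
            (stirling2 p q * (q.factorial : ℂ) * ((k - i).choose q : ℂ)) := by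
    intro i hi
    rw [key p k (k - i) (by omega), Finset.mul_sum, Finset.mul_sum]
    apply Finset.sum_congr rfl
    intro q _
    ring
  rw [Finset.sum_congr rfl h1, Finset.sum_comm,
    ← Finset.sum_range_reflect (fun q => ∑ i ∈ range (k + 1),
      (k.choose i : ℂ) * lam ^ i * (i : ℂ) ^ m *
        (stirling2 p q * (q.factorial : ℂ) * ((k - i).choose q : ℂ))) (k + 1),
    Finset.mul_sum]
  apply Finset.sum_congr rfl
  intro j hjm
  have hj : j ≤ k := by simpa [Nat.lt_succ_iff] using hjm
  have hjf : (j.factorial : ℂ) ≠ 0 := Nat.cast_ne_zero.2 j.factorial_ne_zero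
  have hq : k + 1 - 1 - j = k - j := by omega
  rw [hq, Finset.mul_sum]
  have h2 : ∀ i ∈ range (k + 1),
      (k.factorial : ℂ)⁻¹ * ((k.choose i : ℂ) * lam ^ i * (i : ℂ) ^ m *
          (stirling2 p (k - j) * ((k - j).factorial : ℂ) * ((k - i).choose (k - j) : ℂ)))
        = ((j.factorial : ℂ)⁻¹ * ((j.choose i : ℂ) * (i : ℂ) ^ m * lam ^ i)) *
            stirling2 p (k - j) := by
    intro i him
    have hi : i ≤ k := by simpa [Nat.lt_succ_iff] using him
    have hnat := natid k i j hi hj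
    have hcast : (k.choose i : ℂ) * ((k - i).choose (k - j) : ℂ) *
        (((k - j).factorial : ℂ) * (j.factorial : ℂ)) = (j.choose i : ℂ) * (k.factorial : ℂ) := by
      exact_mod_cast congrArg (Nat.cast : ℕ → ℂ) hnat
    field_simp
    linear_combination (lam ^ i * (i : ℂ) ^ m * stirling2 p (k - j)) * hcast
  rw [Finset.sum_congr rfl h2, ← Finset.sum_mul]
  congr 1
  rw [y1, Finset.mul_sum]
  have hsub : range (j + 1) ⊆ range (k + 1) := range_subset_range.2 (by omega)
  rw [← Finset.sum_subset hsub (fun i _ hi2 => by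
    have : j < i := by simpa using hi2
    rw [Nat.choose_eq_zero_of_lt this]; simp)]

theorem stmt4 (n k : ℕ) (lam a b : ℂ) :
    y3 n k lam a b =
      ∑ j ∈ Finset.range (k + 1), ∑ m ∈ Finset.range (n + 1),
        (n.choose m : ℂ) * a ^ m * b ^ (n - m) * y1 m j lam *
          stirling2 (n - m) (k - j) := by
  rw [y3]
  have hA : ∀ i ∈ range (k + 1),
      (k.choose i : ℂ) * lam ^ i * (b * k + i * (a - b)) ^ n
        = ∑ m ∈ range (n + 1), (n.choose m : ℂ) * a ^ m * b ^ (n - m) *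
            ((k.choose i : ℂ) * lam ^ i * ((i : ℂ) ^ m * ((k - i : ℕ) : ℂ) ^ (n - m))) := by
    intro i him
    have hi : i ≤ k := by simpa [Nat.lt_succ_iff] using him
    have hrw : b * k + i * (a - b) = a * (i : ℂ) + b * ((k - i : ℕ) : ℂ) := by
      rw [Nat.cast_sub hi]; ring
    rw [hrw, add_pow, Finset.mul_sum]
    apply Finset.sum_congr rfl
    intro m _
    rw [mul_pow, mul_pow]
    ring
  rw [Finset.sum_congr rfl hA, Finset.sum_comm, Finset.mul_sum]
  have hB : ∀ m ∈ range (n + 1),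
      (k.factorial : ℂ)⁻¹ * ∑ i ∈ range (k + 1), (n.choose m : ℂ) * a ^ m * b ^ (n - m) *
          ((k.choose i : ℂ) * lam ^ i * ((i : ℂ) ^ m * ((k - i : ℕ) : ℂ) ^ (n - m)))
        = ∑ j ∈ range (k + 1), (n.choose m : ℂ) * a ^ m * b ^ (n - m) * y1 m j lam *
            stirling2 (n - m) (k - j) := by
    intro m _
    rw [← Finset.mul_sum (range (k + 1)) (fun i => (k.choose i : ℂ) * lam ^ i *
        ((i : ℂ) ^ m * ((k - i : ℕ) : ℂ) ^ (n - m))) ((n.choose m : ℂ) * a ^ m * b ^ (n - m))]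
    rw [show (k.factorial : ℂ)⁻¹ * ((n.choose m : ℂ) * a ^ m * b ^ (n - m) *
        ∑ i ∈ range (k + 1), (k.choose i : ℂ) * lam ^ i *
          ((i : ℂ) ^ m * ((k - i : ℕ) : ℂ) ^ (n - m)))
      = (n.choose m : ℂ) * a ^ m * b ^ (n - m) *
        ((k.factorial : ℂ)⁻¹ * ∑ i ∈ range (k + 1), (k.choose i : ℂ) * lam ^ i *
          ((i : ℂ) ^ m * ((k - i : ℕ) : ℂ) ^ (n - m))) from by ring]
    rw [mid m (n - m) k lam, Finset.mul_sum]
    apply Finset.sum_congr rfl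
    intro j _
    ring
  rw [Finset.sum_congr rfl hB, Finset.sum_comm]
end

section
/- The integral from 0 to 1 with respect to x of y_3(n,k;λ;1,x) equals (1/(n+1)) Σ_{m=0}^{n} k^m y_1(n-m,k;λ). -/
noncomputable def y1R (n k : ℕ) (lam : ℝ) : ℝ :=
  (k.factorial : ℝ)⁻¹ * ∑ j ∈ Finset.range (k + 1),
    (k.choose j : ℝ) * (j : ℝ) ^ n * lam ^ j

noncomputable def y3R (n k : ℕ) (lam a b : ℝ) : ℝ :=
  (k.factorial : ℝ)⁻¹ * ∑ j ∈ Finset.range (k + 1),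
    (k.choose j : ℝ) * lam ^ j * (b * k + j * (a - b)) ^ n

/-! Writing `y3R n k lam 1 x` as `(k!)⁻¹ ∑ j, C(k,j) λ^j (j + x(k - j))^n`, integrate term by term:
`∫₀¹ (a + x(b - a))^n dx = (b^(n+1) - a^(n+1)) / ((n+1)(b - a)) = (n+1)⁻¹ ∑ₘ b^m a^(n-m)`
with `a = j`, `b = k`, and the last sum regroups into `∑ₘ k^m y1R (n-m) k λ`. -/

open Finset

theorem integral_pow_add_mul_sub (n : ℕ) (a b : ℝ) :
    ∫ x in (0:ℝ)..1, (a + x * (b - a)) ^ n =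
      ((n : ℝ) + 1)⁻¹ * ∑ m ∈ range (n + 1), b ^ m * a ^ (n - m) := by
  have hn : (n : ℝ) + 1 ≠ 0 := by positivity
  rcases eq_or_ne b a with rfl | hba
  · have := geom_sum₂_self b (n + 1)
    simp only [add_tsub_cancel_right, Nat.cast_add, Nat.cast_one] at this
    simp [this, hn]
  · have hsub : b - a ≠ 0 := sub_ne_zero.mpr hba
    have hgeom := geom_sum₂_mul b a (n + 1)
    simp only [Nat.add_sub_cancel] at hgeom
    simp_rw [add_comm a, mul_comm _ (b - a)]
    rw [intervalIntegral.integral_comp_mul_add (· ^ n) hsub, integral_pow, smul_eq_mul]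
    field_simp
    rw [sub_add_cancel, mul_zero, zero_add, ← hgeom, mul_comm]

theorem y3R_one (n k : ℕ) (lam x : ℝ) :
    y3R n k lam 1 x = (k.factorial : ℝ)⁻¹ * ∑ j ∈ range (k + 1),
      (k.choose j : ℝ) * lam ^ j * ((j : ℝ) + x * (k - j)) ^ n := by
  unfold y3R
  congr! 3 with j
  ring

theorem sum_pow_mul_y1R (n k : ℕ) (lam : ℝ) :
    ∑ m ∈ range (n + 1), (k : ℝ) ^ m * y1R (n - m) k lam =
      (k.factorial : ℝ)⁻¹ * ∑ j ∈ range (k + 1), (k.choose j : ℝ) * lam ^ j *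
        ∑ m ∈ range (n + 1), (k : ℝ) ^ m * (j : ℝ) ^ (n - m) := by
  simp only [y1R, mul_sum]
  rw [sum_comm]
  congr! 2
  ring

theorem stmt11 (n k : ℕ) (lam : ℝ) :
    ∫ x in (0:ℝ)..1, y3R n k lam 1 x =
      ((n : ℝ) + 1)⁻¹ * ∑ m ∈ Finset.range (n + 1), (k : ℝ) ^ m * y1R (n - m) k lam := by
  simp_rw [y3R_one]
  rw [intervalIntegral.integral_const_mul, intervalIntegral.integral_finsetSum fun j _ =>
    (by fun_prop : Continuous _).intervalIntegrable _ _]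
  simp_rw [intervalIntegral.integral_const_mul, integral_pow_add_mul_sub, sum_pow_mul_y1R, mul_sum]
  congr! 2
  ring
end

section
/- y_3(n,k;λ;1,x) = Σ_{m=0}^{n} k^m B_m^n(x) y_1(n-m,k;λ), where B_m^n(x) = C(n,m) x^m (1-x)^{n-m} is the Bernstein basis function. -/
theorem stmt12 (n k : ℕ) (lam x : ℂ) :
    y3 n k lam 1 x =
      ∑ m ∈ Finset.range (n + 1),
        (k : ℂ) ^ m * ((n.choose m : ℂ) * x ^ m * (1 - x) ^ (n - m)) *
          y1 (n - m) k lam := by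
  unfold y3 y1
  simp only [add_pow, Finset.mul_sum, Finset.sum_mul]
  rw [Finset.sum_comm]
  apply Finset.sum_congr rfl; intro m _
  apply Finset.sum_congr rfl; intro j _
  rw [mul_pow, mul_pow]
  ring
end

section
/- The second kind Apostol type Euler polynomials of order -k satisfy E_n^{*(-k)}(x;λ) = (k! 2^{n-k} / λ^k) · y_3(n,k;λ²; (x+k)/(2k), (x-k)/(2k)), i.e., E_n^{*(-k)}(x;λ) = 2^{-k} Σ_{j=0}^{k} C(k,j) λ^{2j-k} (x - k + 2j)^n. -/
/-!
Writing `u = λ e^t`, the generating function is `2^{-k} (u + u⁻¹)^k e^{tx}`, and the binomial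
theorem turns it into the finite sum of exponentials
`2^{-k} Σ_j C(k,j) λ^{2j-k} e^{t(x-k+2j)}`. Expanding each exponential and comparing Taylor
coefficients (uniqueness of power series at `0`) gives the second formula. The first one is the
same sum, since `b k + j (a - b) = (x - k + 2j)/2` for `a, b = (x ± k)/(2k)`.
-/

open Finset Nat

section PowerSeries

variable {𝕜 : Type*} [NontriviallyNormedField 𝕜]

theorem hasFPowerSeriesOnBall_ofScalars_of_forall_hasSum {c : ℕ → 𝕜} {f : 𝕜 → 𝕜}
    (hc : ∀ t, HasSum (fun n => c n * t ^ n) (f t)) :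
    HasFPowerSeriesOnBall f (.ofScalars 𝕜 c) 0 1 where
  r_le := by
    refine FormalMultilinearSeries.le_radius_of_tendsto _ (l := 0) ?_
    simpa [FormalMultilinearSeries.ofScalars_norm] using
      (hc 1).summable.tendsto_atTop_zero.norm
  r_pos := one_pos
  hasSum := fun {y} _ => by
    simpa [FormalMultilinearSeries.ofScalars_apply_eq, mul_comm] using hc y

theorem eq_of_forall_hasSum_mul_pow {a b : ℕ → 𝕜} {f : 𝕜 → 𝕜}
    (ha : ∀ t, HasSum (fun n => a n * t ^ n) (f t))
    (hb : ∀ t, HasSum (fun n => b n * t ^ n) (f t)) : a = b := by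
  have hpa := (hasFPowerSeriesOnBall_ofScalars_of_forall_hasSum ha).hasFPowerSeriesAt
  have hpb := (hasFPowerSeriesOnBall_ofScalars_of_forall_hasSum hb).hasFPowerSeriesAt
  exact (FormalMultilinearSeries.ofScalars_series_eq_iff 𝕜 a b).mp
    (hpa.eq_formalMultilinearSeries hpb)

theorem eq_of_forall_hasSum_mul_pow_div_factorial [CharZero 𝕜] {a b : ℕ → 𝕜} {f : 𝕜 → 𝕜}
    (ha : ∀ t, HasSum (fun n => a n * t ^ n / n !) (f t))
    (hb : ∀ t, HasSum (fun n => b n * t ^ n / n !) (f t)) : a = b := by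
  have key := eq_of_forall_hasSum_mul_pow (a := fun n => a n / n !) (b := fun n => b n / n !)
    (f := f) (by simpa only [div_mul_eq_mul_div] using ha)
    (by simpa only [div_mul_eq_mul_div] using hb)
  funext n
  simpa [n.factorial_ne_zero] using congrFun key n

end PowerSeries

section GroupWithZero

variable {G : Type*} [GroupWithZero G] {u : G}

theorem pow_mul_inv_pow_sub_eq_zpow (hu : u ≠ 0) {j k : ℕ} (hj : j ≤ k) :
    u ^ j * u⁻¹ ^ (k - j) = u ^ (2 * (j : ℤ) - k) := by
  rw [← zpow_natCast, ← zpow_natCast, inv_zpow', ← zpow_add₀ hu]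
  congr 1
  omega

theorem zpow_two_mul_sub (hu : u ≠ 0) (j k : ℕ) :
    u ^ (2 * (j : ℤ) - k) = (u ^ 2) ^ j / u ^ k := by
  rw [zpow_sub₀ hu, zpow_mul, zpow_natCast, zpow_natCast, zpow_ofNat]

end GroupWithZero

theorem Complex.hasSum_pow_mul_pow_div_factorial (r t : ℂ) :
    HasSum (fun n => r ^ n * t ^ n / n !) (exp (t * r)) := by
  rw [exp_eq_exp_ℂ]
  simpa only [mul_pow, mul_comm] using NormedSpace.expSeries_div_hasSum_exp (t * r)

theorem Complex.hasSum_sum_mul_pow_mul_pow_div_factorial {ι : Type*} (s : Finset ι)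
    (w r : ι → ℂ) (t : ℂ) :
    HasSum (fun n => (∑ i ∈ s, w i * r i ^ n) * t ^ n / n !) (∑ i ∈ s, w i * exp (t * r i)) := by
  simpa only [sum_mul, sum_div, mul_assoc, mul_div_assoc] using
    hasSum_sum fun i _ => (hasSum_pow_mul_pow_div_factorial (r i) t).mul_left (w i)

theorem apostolEuler_genFun_eq_sum (k : ℕ) {lam : ℂ} (hlam : lam ≠ 0) (x t : ℂ) :
    ((lam * Complex.exp t + lam⁻¹ * Complex.exp (-t)) / 2) ^ k * Complex.exp (t * x) =
      ((2 : ℂ) ^ k)⁻¹ * ∑ j ∈ range (k + 1),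
        (k.choose j : ℂ) * lam ^ (2 * (j : ℤ) - k) * Complex.exp (t * (x - k + 2 * j)) := by
  have hu : lam * Complex.exp t ≠ 0 := mul_ne_zero hlam (Complex.exp_ne_zero t)
  have hinv : lam⁻¹ * Complex.exp (-t) = (lam * Complex.exp t)⁻¹ := by
    rw [mul_inv, Complex.exp_neg]
  rw [hinv, div_pow, add_pow, sum_div, sum_mul, Finset.mul_sum]
  refine sum_congr rfl fun j hj => ?_
  rw [pow_mul_inv_pow_sub_eq_zpow hu (Nat.lt_succ_iff.mp (mem_range.mp hj)), mul_zpow,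
    ← Complex.exp_int_mul]
  have hexp : Complex.exp (((2 * (j : ℤ) - k : ℤ) : ℂ) * t) * Complex.exp (t * x) =
      Complex.exp (t * (x - k + 2 * j)) := by
    rw [← Complex.exp_add]; push_cast; ring_nf
  rw [← hexp]
  ring

theorem y3_shift_eq_sum (n k : ℕ) (hk : k ≠ 0) (μ x : ℂ) :
    y3 n k μ ((x + k) / (2 * k)) ((x - k) / (2 * k)) =
      ((k ! : ℂ) * 2 ^ n)⁻¹ *
        ∑ j ∈ range (k + 1), (k.choose j : ℂ) * μ ^ j * (x - k + 2 * j) ^ n := by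
  have hk' : (k : ℂ) ≠ 0 := Nat.cast_ne_zero.mpr hk
  rw [y3, mul_inv, mul_assoc]
  congr 1
  rw [Finset.mul_sum]
  refine sum_congr rfl fun j _ => ?_
  have harg : (x - k) / (2 * k) * k + j * ((x + k) / (2 * k) - (x - k) / (2 * k)) =
      (x - k + 2 * j) / 2 := by
    field_simp; ring
  rw [harg, div_pow]
  ring

theorem stmt14 (k : ℕ) (hk : 0 < k) (lam x : ℂ) (hlam : lam ≠ 0) (E : ℕ → ℂ)
    (hE : ∀ t : ℂ, HasSum (fun n => E n * t ^ n / n.factorial)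
      (((lam * Complex.exp t + lam⁻¹ * Complex.exp (-t)) / 2) ^ k *
        Complex.exp (t * x))) :
    ∀ n : ℕ,
      E n = (k.factorial : ℂ) * 2 ^ n / (2 ^ k * lam ^ k) *
        y3 n k (lam ^ 2) ((x + k) / (2 * k)) ((x - k) / (2 * k)) ∧
      E n = ((2 : ℂ) ^ k)⁻¹ * ∑ j ∈ Finset.range (k + 1),
        (k.choose j : ℂ) * lam ^ (2 * (j : ℤ) - k) * (x - k + 2 * j) ^ n := by
  have hcoeff : E = fun n => ((2 : ℂ) ^ k)⁻¹ * ∑ j ∈ range (k + 1),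
      (k.choose j : ℂ) * lam ^ (2 * (j : ℤ) - k) * (x - k + 2 * j) ^ n := by
    refine eq_of_forall_hasSum_mul_pow_div_factorial hE fun t => ?_
    rw [apostolEuler_genFun_eq_sum k hlam]
    simpa only [mul_assoc, mul_div_assoc] using
      (Complex.hasSum_sum_mul_pow_mul_pow_div_factorial (range (k + 1))
        (fun j => (k.choose j : ℂ) * lam ^ (2 * (j : ℤ) - k)) (fun j => x - k + 2 * j) t).mul_left
        ((2 : ℂ) ^ k)⁻¹
  intro n
  refine ⟨?_, congrFun hcoeff n⟩
  have hsum :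
      ∑ j ∈ range (k + 1), (k.choose j : ℂ) * lam ^ (2 * (j : ℤ) - k) * (x - k + 2 * j) ^ n =
        (∑ j ∈ range (k + 1), (k.choose j : ℂ) * (lam ^ 2) ^ j * (x - k + 2 * j) ^ n) / lam ^ k := by
    simp only [zpow_two_mul_sub hlam, mul_div_assoc', div_mul_eq_mul_div, sum_div]
  have hfac : (k ! : ℂ) ≠ 0 := Nat.cast_ne_zero.mpr k.factorial_ne_zero
  rw [congrFun hcoeff n, y3_shift_eq_sum n k hk.ne', hsum]
  field_simp
end
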